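/- Let H_0 be a bounded self-adjoint operator on a Hilbert space, φ a unit vector, h > 0, H = H_0 + h(φ,·)φ, and q_λ = (λI − H_0)^{-1}φ for λ in the resolvent set of H_0. If λ is real, lies in the resolvent set of H_0, and satisfies h(φ, q_λ) = 1, then λ is an eigenvalue of H with eigenvector q_λ. -/

import Mathlib

open scoped RealInnerProductSpace

section RankOnePerturbation

variable {𝕜 E : Type*} [NormedField 𝕜] [SeminormedAddCommGroup E] [NormedSpace 𝕜 E]

theorem smul_sub_apply_resolvent_apply {T : E →L[𝕜] E} {lam : 𝕜}
    (hlam : lam ∈ resolventSet 𝕜 T) (x : E) :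
    lam • resolvent T lam x - T (resolvent T lam x) = x := by
  have hright := congr($(Ring.mul_inverse_cancel _ (spectrum.mem_resolventSet_iff.mp hlam)) x)
  simpa [resolvent, Algebra.algebraMap_eq_smul_one] using hright

theorem add_smul_smulRight_apply_eq_smul {T : E →L[𝕜] E} {lam c : 𝕜} {f : E →L[𝕜] 𝕜}
    {φ q : E} (hq : lam • q - T q = φ) (hfq : c * f q = 1) :
    (T + c • f.smulRight φ) q = lam • q := by
  rw [add_apply, smul_apply, ContinuousLinearMap.smulRight_apply, smul_smul, hfq, one_smul, ← hq]
  abel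

end RankOnePerturbation

theorem stmt_4_general {E : Type*} [NormedAddCommGroup E] [InnerProductSpace ℝ E]
    (H0 : E →L[ℝ] E)
    (φ : E) (h : ℝ)
    (H : E →L[ℝ] E) (hH : H = H0 + h • ((innerSL ℝ φ).smulRight φ))
    (lam : ℝ) (hres0 : lam ∈ resolventSet ℝ H0)
    (q : E) (hq : q = Ring.inverse (algebraMap ℝ (E →L[ℝ] E) lam - H0) φ)
    (hroot : h * ⟪φ, q⟫ = 1) :
    q ≠ 0 ∧ H q = lam • q := by
  refine ⟨?_, ?_⟩
  · rintro rfl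
    simp at hroot
  · have hsub : lam • q - H0 q = φ := hq ▸ smul_sub_apply_resolvent_apply hres0 φ
    exact hH ▸ add_smul_smulRight_apply_eq_smul hsub hroot

/-- Rank-one perturbation: if `λ` is real, lies in the resolvent set of `H₀`, and
satisfies `h(φ, q_λ) = 1` where `q_λ = (λI − H₀)⁻¹φ`, then `λ` is an eigenvalue of
`H = H₀ + h(φ,·)φ` with eigenvector `q_λ`. -/
theorem stmt_4 {E : Type*} [NormedAddCommGroup E] [InnerProductSpace ℝ E]
    [CompleteSpace E] (H0 : E →L[ℝ] E) (hH0 : IsSelfAdjoint H0)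
    (φ : E) (hφ : ‖φ‖ = 1) (h : ℝ) (hh : 0 < h)
    (H : E →L[ℝ] E) (hH : H = H0 + h • ((innerSL ℝ φ).smulRight φ))
    (lam : ℝ) (hres0 : lam ∈ resolventSet ℝ H0)
    (q : E) (hq : q = Ring.inverse (algebraMap ℝ (E →L[ℝ] E) lam - H0) φ)
    (hroot : h * ⟪φ, q⟫ = 1) :
    q ≠ 0 ∧ H q = lam • q :=
  stmt_4_general H0 φ h H hH lam hres0 q hq hroot
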